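/- If X is the distance to the nearest point of a homogeneous planar Poisson process of intensity λ_p > 0 (so X has density f(x) = 2πλ_p x e^{-πλ_p x²} on (0,∞)), then the expectation E[min{1, X^{-2}}] equals 1 - e^{-πλ_p} - πλ_p · Ei(-πλ_p). -/

import Mathlib

open Real MeasureTheory Set

/-!
Split the integral at `x = 1`, where `min 1 x⁻²` changes branch. On `(0, 1]` the integrand is the
density itself, whose antiderivative `-exp (-a x²)` (with `a = π λ_p`) gives `1 - exp (-a)`. On
`(1, ∞)` it is `a · 2 exp (-a x²) / x`, and the substitution `u = a x²` turns this into
`a ∫_a^∞ exp (-u) / u du = -a Ei (-a)`.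
-/

lemma hasDerivAt_mul_sq (a x : ℝ) : HasDerivAt (fun x : ℝ => a * x ^ 2) (2 * a * x) x := by
  simpa [mul_comm, mul_left_comm, mul_assoc] using (hasDerivAt_pow 2 x).const_mul a

lemma intervalIntegral_mul_exp_neg_mul_sq (a b : ℝ) :
    ∫ x in (0 : ℝ)..b, 2 * a * x * exp (-(a * x ^ 2)) = 1 - exp (-(a * b ^ 2)) := by
  have hderiv : ∀ x, HasDerivAt (fun x : ℝ => -exp (-(a * x ^ 2)))
      (2 * a * x * exp (-(a * x ^ 2))) x := fun x =>
    ((hasDerivAt_mul_sq a x).fun_neg.exp).fun_neg.congr_deriv (by ring)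
  rw [intervalIntegral.integral_eq_sub_of_hasDerivAt (fun x _ => hderiv x)
    ((by fun_prop : Continuous _).intervalIntegrable _ _)]
  rw [zero_pow two_ne_zero, mul_zero, neg_zero, exp_zero]
  ring

lemma strictMonoOn_const_mul_sq {a : ℝ} (ha : 0 < a) {c : ℝ} (hc : 0 ≤ c) :
    StrictMonoOn (fun x : ℝ => a * x ^ 2) (Ici c) := fun _ hx _ _ hxy =>
  mul_lt_mul_of_pos_left (pow_lt_pow_left₀ hxy (hc.trans hx) two_ne_zero) ha

lemma image_const_mul_sq_Ioi {a : ℝ} (ha : 0 < a) {c : ℝ} (hc : 0 ≤ c) :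
    (fun x : ℝ => a * x ^ 2) '' Ioi c = Ioi (a * c ^ 2) :=
  (by fun_prop : Continuous fun x : ℝ => a * x ^ 2).continuousOn.image_Ioi_of_strictMonoOn
    (strictMonoOn_const_mul_sq ha hc) ((Filter.tendsto_pow_atTop two_ne_zero).const_mul_atTop ha)

lemma integral_Ioi_exp_neg_mul_sq_div {a : ℝ} (ha : 0 < a) {c : ℝ} (hc : 0 ≤ c) :
    ∫ x in Ioi c, 2 * exp (-(a * x ^ 2)) / x = ∫ u in Ioi (a * c ^ 2), exp (-u) / u := by
  rw [← image_const_mul_sq_Ioi ha hc, integral_image_eq_integral_abs_deriv_smul measurableSet_Ioi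
    (fun x _ => (hasDerivAt_mul_sq a x).hasDerivWithinAt)
    ((strictMonoOn_const_mul_sq ha hc).injOn.mono Ioi_subset_Ici_self)]
  refine setIntegral_congr_fun measurableSet_Ioi fun x hx => ?_
  have hx : 0 < x := hc.trans_lt hx
  rw [abs_of_pos (by positivity), smul_eq_mul]
  field_simp

lemma min_one_rpow_neg_two_of_le_one {x : ℝ} (hx₀ : 0 < x) (hx₁ : x ≤ 1) :
    min 1 (x ^ (-2 : ℝ)) = 1 :=
  min_eq_left (one_le_rpow_of_pos_of_le_one_of_nonpos hx₀ hx₁ (by norm_num))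

lemma min_one_rpow_neg_two_of_one_le {x : ℝ} (hx : 1 ≤ x) :
    min 1 (x ^ (-2 : ℝ)) = (x ^ 2)⁻¹ := by
  rw [min_eq_right (rpow_le_one_of_one_le_of_nonpos hx (by norm_num)), rpow_neg (by positivity)]
  norm_cast

lemma integrableOn_min_one_rpow_neg_two_mul_density {a : ℝ} (ha : 0 < a) :
    IntegrableOn (fun x : ℝ => min 1 (x ^ (-2 : ℝ)) * (2 * a * x * exp (-(a * x ^ 2))))
      (Ioi (0 : ℝ)) := by
  refine Integrable.mono' ((integrable_mul_exp_neg_mul_sq ha).const_mul (2 * a)).integrableOn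
    (by fun_prop) ((ae_restrict_mem measurableSet_Ioi).mono fun x (hx : 0 < x) => ?_)
  have hmin : 0 ≤ min 1 (x ^ (-2 : ℝ)) := le_min zero_le_one (by positivity)
  rw [norm_mul, Real.norm_of_nonneg hmin, Real.norm_of_nonneg (by positivity), neg_mul]
  exact (mul_le_of_le_one_left (by positivity) (min_le_left _ _)).trans_eq (by ring)

lemma integral_min_one_rpow_neg_two_mul_density {a : ℝ} (ha : 0 < a) :
    ∫ x in Ioi (0 : ℝ), min 1 (x ^ (-2 : ℝ)) * (2 * a * x * exp (-(a * x ^ 2))) =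
      1 - exp (-a) + a * ∫ u in Ioi a, exp (-u) / u := by
  have hint := integrableOn_min_one_rpow_neg_two_mul_density ha
  rw [← Ioc_union_Ioi_eq_Ioi zero_le_one, setIntegral_union (Ioc_disjoint_Ioi le_rfl)
    measurableSet_Ioi (hint.mono_set Ioc_subset_Ioi_self)
    (hint.mono_set (Ioi_subset_Ioi zero_le_one))]
  have hnear : EqOn (fun x : ℝ => min 1 (x ^ (-2 : ℝ)) * (2 * a * x * exp (-(a * x ^ 2))))
      (fun x => 2 * a * x * exp (-(a * x ^ 2))) (Ioc 0 1) := fun x hx => by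
    simp only [min_one_rpow_neg_two_of_le_one hx.1 hx.2, one_mul]
  have hfar : EqOn (fun x : ℝ => min 1 (x ^ (-2 : ℝ)) * (2 * a * x * exp (-(a * x ^ 2))))
      (fun x => a * (2 * exp (-(a * x ^ 2)) / x)) (Ioi 1) := fun x (hx : 1 < x) => by
    have : x ≠ 0 := by positivity
    simp only [min_one_rpow_neg_two_of_one_le hx.le]
    field_simp
  rw [setIntegral_congr_fun measurableSet_Ioc hnear, setIntegral_congr_fun measurableSet_Ioi hfar,
    integral_const_mul, integral_Ioi_exp_neg_mul_sq_div ha zero_le_one,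
    ← intervalIntegral.integral_of_le zero_le_one, intervalIntegral_mul_exp_neg_mul_sq]
  simp

/-- If `X` has density `f(x) = 2πλ_p x e^{-πλ_p x²}` on `(0,∞)` (nearest-point distance of a
planar PPP of intensity `λ_p`), then `E[min{1, X⁻²}] = 1 - e^{-πλ_p} - πλ_p Ei(-πλ_p)`. -/
theorem stmt_2 (Ei : ℝ → ℝ)
    (hEi : ∀ y : ℝ, 0 < y → Ei (-y) = -∫ t in Set.Ioi y, Real.exp (-t) / t)
    (lp : ℝ) (hlp : 0 < lp) :
    ∫ x in Set.Ioi (0:ℝ),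
        min 1 (x ^ (-2 : ℝ)) * (2 * π * lp * x * Real.exp (-(π * lp * x ^ 2))) =
      1 - Real.exp (-(π * lp)) - π * lp * Ei (-(π * lp)) := by
  have ha : 0 < π * lp := by positivity
  rw [hEi _ ha, mul_neg, sub_neg_eq_add, ← integral_min_one_rpow_neg_two_mul_density ha]
  simp only [mul_assoc]
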